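/- Fix integers n ≥ 1 and 0 ≤ q ≤ n−1 and a real ε > 0. Then there exists A > 0 such that the following holds: for all positive integers a_1, …, a_n and c_1, …, c_n with c_j ≤ a_j for each j, with min_j a_j ≥ A and ∏_j c_j ≤ (∏_j a_j)/A, for every integer m ≥ 2 and all integers r_1, …, r_n with 1 ≤ r_j ≤ m−1, letting Δ = {x ∈ ℝ^n : 0 ≤ x_j ≤ a_j for all j, and Σ_j x_j/c_j ≥ 1} (a rectangular box with the corner simplex at the origin cut off), one has | Σ_{i=0}^{q} (−1)^i · C(n+1, i) · #{x ∈ ℤ^n : x_j ≡ r_j (mod m) for all j, and x/((q+1−i)·m) ∈ Δ} − A(n, q) · vol(Δ) | ≤ ε · ∏_j a_j, where vol denotes Lebesgue measure on ℝ^n. -/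

import Mathlib

open MeasureTheory

/-- The number of descents of a permutation `σ` of `{0, …, n-1}`: the number of
indices `i` with `i + 1 < n` and `σ(i) > σ(i+1)`. -/
def numDescents (n : ℕ) (σ : Equiv.Perm (Fin n)) : ℕ :=
  ((Finset.range (n - 1)).filter (fun i =>
    ∀ h : i + 1 < n, σ ⟨i + 1, h⟩ < σ ⟨i, Nat.lt_of_succ_lt h⟩)).card

/-- The Eulerian number `A(n, q)`: the number of permutations of an `n`-element set
with exactly `q` descents. -/
def eulerianNumber (n q : ℕ) : ℕ :=
  (Finset.univ.filter (fun σ : Equiv.Perm (Fin n) => numDescents n σ = q)).card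

/-- The rectangular box `∏_j [0, a_j]` with the corner simplex
`{Σ_j x_j/c_j < 1}` at the origin cut off. -/
def truncBox (n : ℕ) (a c : Fin n → ℕ) : Set (Fin n → ℝ) :=
  {x | (∀ j, 0 ≤ x j ∧ x j ≤ (a j : ℝ)) ∧ 1 ≤ ∑ j, x j / (c j : ℝ)}


/-- `T n d = ∑_{i=0}^{d} (-1)^i C(n+1,i) C(n+d-i, n)` -/
def Tsum (n d : ℕ) : ℤ :=
  ∑ i ∈ Finset.range (d + 1), (-1 : ℤ) ^ i * ((n+1).choose i) * ((n + d - i).choose n)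

def Ssum (n d : ℕ) : ℤ :=
  ∑ i ∈ Finset.range (d + 1), (-1 : ℤ) ^ i * (n.choose i) * ((n + d - i).choose n)

lemma Tsum_eq (n d : ℕ) : Tsum n (d+1) = Ssum n (d+1) - Ssum n d := by
  unfold Tsum Ssum
  rw [Finset.sum_range_succ' (fun i => (-1 : ℤ) ^ i * ((n+1).choose i) * ((n + (d+1) - i).choose n))]
  rw [Finset.sum_range_succ' (fun i => (-1 : ℤ) ^ i * (n.choose i) * ((n + (d+1) - i).choose n))]
  have h : ∀ i ∈ Finset.range (d+1),
      (-1 : ℤ) ^ (i+1) * ((n+1).choose (i+1)) * ((n + (d+1) - (i+1)).choose n)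
      = (-1 : ℤ) ^ (i+1) * (n.choose (i+1)) * ((n + (d+1) - (i+1)).choose n)
        - (-1 : ℤ) ^ i * (n.choose i) * ((n + d - i).choose n) := by
    intro i _
    have hc : ((n+1).choose (i+1) : ℤ) = n.choose i + n.choose (i+1) := by
      rw [Nat.choose_succ_succ]; push_cast; ring
    have he : n + (d+1) - (i+1) = n + d - i := by omega
    rw [hc, he]
    ring
  rw [Finset.sum_congr rfl h]
  simp [Nat.choose]
  ring

lemma Ssum_sub (n d : ℕ) : Ssum (n+1) (d+1) - Ssum (n+1) d = Tsum n (d+1) := by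
  unfold Tsum Ssum
  have hext : (∑ i ∈ Finset.range (d + 1), (-1 : ℤ) ^ i * ((n+1).choose i) * ((n + 1 + d - i).choose (n+1)))
      = ∑ i ∈ Finset.range (d + 2), (-1 : ℤ) ^ i * ((n+1).choose i) * ((n + 1 + d - i).choose (n+1)) := by
    conv_rhs => rw [show d + 2 = (d+1) + 1 from rfl, Finset.sum_range_succ]
    have h0 : n + 1 + d - (d+1) = n := by omega
    rw [h0, Nat.choose_succ_self]
    simp
  rw [hext, ← Finset.sum_sub_distrib]
  apply Finset.sum_congr rfl
  intro i hi
  simp only [Finset.mem_range] at hi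
  have h1 : n + 1 + (d+1) - i = (n + 1 + d - i) + 1 := by omega
  have h2 : (((n + 1 + d - i) + 1).choose (n+1) : ℤ)
      = (n + 1 + d - i).choose n + (n + 1 + d - i).choose (n+1) := by
    rw [Nat.choose_succ_succ]; push_cast; ring
  have h3 : n + (d + 1) - i = n + 1 + d - i := by omega
  rw [h1, h2, h3]
  ring

lemma Tsum_succ_n (n d : ℕ) : Tsum (n+1) d = Tsum n d := by
  cases d with
  | zero => simp [Tsum]
  | succ d => rw [Tsum_eq, Ssum_sub]

lemma Tsum_zero_n (d : ℕ) : Tsum 0 d = if d = 0 then 1 else 0 := by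
  cases d with
  | zero => simp [Tsum]
  | succ d =>
    unfold Tsum
    rw [if_neg (Nat.succ_ne_zero d)]
    have hterm : ∀ i, ((-1:ℤ)^i * ((0+1).choose i) * ((0 + (d+1) - i).choose 0)) =
        if i = 0 then 1 else if i = 1 then -1 else 0 := by
      intro i
      match i with
      | 0 => simp
      | 1 => simp
      | (j+2) =>
        have : (0+1).choose (j+2) = 0 := by apply Nat.choose_eq_zero_of_lt; omega
        simp [this]
    rw [Finset.sum_congr rfl (fun i _ => hterm i)]
    have aux : ∀ N : ℕ, (∑ i ∈ Finset.range (N + 2), if i = 0 then (1:ℤ) else if i = 1 then -1 else 0) = 0 := by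
      intro N
      induction N with
      | zero => decide
      | succ e ih =>
        rw [show e + 1 + 2 = (e + 2) + 1 from rfl, Finset.sum_range_succ, ih]
        norm_num
        omega
    exact aux d

lemma Tsum_eval (n d : ℕ) : Tsum n d = if d = 0 then 1 else 0 := by
  induction n with
  | zero => exact Tsum_zero_n d
  | succ n ih => rw [Tsum_succ_n, ih]

/-- number of descents of `σ` among positions `< j` -/
def dBelow (n : ℕ) (σ : Equiv.Perm (Fin n)) (j : ℕ) : ℕ :=
  ((Finset.range j).filter (fun i =>
    ∀ h : i + 1 < n, σ ⟨i + 1, h⟩ < σ ⟨i, Nat.lt_of_succ_lt h⟩)).card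

lemma dBelow_le (n : ℕ) (σ : Equiv.Perm (Fin n)) (j : ℕ) : dBelow n σ j ≤ j :=
  le_trans (Finset.card_filter_le _ _) (le_of_eq (Finset.card_range j))

lemma dBelow_mono (n : ℕ) (σ : Equiv.Perm (Fin n)) {j j' : ℕ} (h : j ≤ j') :
    dBelow n σ j ≤ dBelow n σ j' :=
  Finset.card_le_card (Finset.filter_subset_filter _ (Finset.range_subset_range.2 h))

lemma dBelow_eq_numDescents (n : ℕ) (σ : Equiv.Perm (Fin n)) :
    dBelow n σ (n - 1) = numDescents n σ := rfl

lemma numDescents_le (n : ℕ) (σ : Equiv.Perm (Fin n)) : numDescents n σ ≤ n - 1 :=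
  dBelow_le n σ (n - 1)

lemma dBelow_succ (n : ℕ) (σ : Equiv.Perm (Fin n)) (j : ℕ) :
    dBelow n σ (j + 1) =
      dBelow n σ j + (if ∀ h : j + 1 < n, σ ⟨j + 1, h⟩ < σ ⟨j, Nat.lt_of_succ_lt h⟩ then 1 else 0) := by
  unfold dBelow
  rw [Finset.range_add_one, Finset.filter_insert]
  split_ifs with h
  · rw [Finset.card_insert_of_notMem (by simp)]
  · rfl

section chain
variable {n : ℕ} {β : Type*} [Preorder β]

lemma chain_le {v : Fin n → β} (h : ∀ l : ℕ, ∀ hl : l + 1 < n,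
      v ⟨l, Nat.lt_of_succ_lt hl⟩ ≤ v ⟨l + 1, hl⟩) :
    Monotone v := by
  intro x y hxy
  obtain ⟨a, ha⟩ := x
  obtain ⟨b, hb⟩ := y
  simp only [Fin.mk_le_mk] at hxy ⊢
  induction b with
  | zero => interval_cases a; exact le_refl _
  | succ c ih =>
    rcases Nat.eq_or_lt_of_le hxy with rfl | hlt
    · exact le_refl _
    · exact le_trans (ih (Nat.lt_of_succ_lt hb) (Nat.lt_succ_iff.1 hlt)) (h c hb)

lemma chain_lt_of_between {v : Fin n → β} {a b : ℕ} (ha : a < n) (hb : b < n) (hab : a < b)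
    (h : ∀ l : ℕ, a ≤ l → l + 1 ≤ b → ∀ hl : l + 1 < n,
      v ⟨l, Nat.lt_of_succ_lt hl⟩ < v ⟨l + 1, hl⟩) :
    v ⟨a, ha⟩ < v ⟨b, hb⟩ := by
  induction b with
  | zero => omega
  | succ c ih =>
    rcases Nat.eq_or_lt_of_le (Nat.lt_succ_iff.1 hab) with rfl | hlt
    · exact h a (le_refl _) (le_refl _) hb
    · exact lt_trans
        (ih (Nat.lt_of_succ_lt hb) hlt (fun l hal hl1 hln => h l hal (by omega) hln))
        (h c (by omega) (le_refl _) hb)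

lemma chain_strict {v : Fin n → β} (h : ∀ l : ℕ, ∀ hl : l + 1 < n,
      v ⟨l, Nat.lt_of_succ_lt hl⟩ < v ⟨l + 1, hl⟩) :
    StrictMono v := by
  intro x y hxy
  obtain ⟨a, ha⟩ := x
  obtain ⟨b, hb⟩ := y
  exact chain_lt_of_between ha hb hxy (fun l _ _ hl => h l hl)

lemma chain_gap {v : Fin n → ℕ} (h : ∀ l : ℕ, ∀ hl : l + 1 < n,
      v ⟨l, Nat.lt_of_succ_lt hl⟩ < v ⟨l + 1, hl⟩) :
    ∀ (a b : ℕ) (ha : a < n) (hb : b < n), a ≤ b → v ⟨a, ha⟩ + (b - a) ≤ v ⟨b, hb⟩ := by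
  intro a b ha hb hab
  induction b with
  | zero => interval_cases a; simp
  | succ c ih =>
    rcases Nat.eq_or_lt_of_le hab with rfl | hlt
    · simp
    · have h1 := ih (Nat.lt_of_succ_lt hb) (Nat.lt_succ_iff.1 hlt)
      have h2 := h c hb
      omega

end chain

/-- `g` is weakly increasing and strictly increasing at each descent of `σ`. -/
def Good {n k : ℕ} (σ : Equiv.Perm (Fin n)) (g : Fin n → Fin k) : Prop :=
  (∀ j : ℕ, ∀ hj : j + 1 < n, g ⟨j, Nat.lt_of_succ_lt hj⟩ ≤ g ⟨j + 1, hj⟩) ∧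
  (∀ j : ℕ, ∀ hj : j + 1 < n, σ ⟨j + 1, hj⟩ < σ ⟨j, Nat.lt_of_succ_lt hj⟩ →
    g ⟨j, Nat.lt_of_succ_lt hj⟩ < g ⟨j + 1, hj⟩)

lemma sort_char {n k : ℕ} (f : Fin n → Fin k) (σ : Equiv.Perm (Fin n)) :
    Tuple.sort f = σ ↔ Good σ (f ∘ σ) := by
  rw [eq_comm, Tuple.eq_sort_iff]
  constructor
  · rintro ⟨hmono, hpair⟩
    refine ⟨fun j hj => hmono (by simp [Fin.mk_le_mk]), fun j hj hdesc => ?_⟩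
    rcases lt_or_eq_of_le (hmono (show (⟨j, Nat.lt_of_succ_lt hj⟩ : Fin n) ≤ ⟨j+1, hj⟩ by
      simp [Fin.mk_le_mk])) with h | h
    · exact h
    · exact absurd (hpair ⟨j, Nat.lt_of_succ_lt hj⟩ ⟨j+1, hj⟩ (by simp [Fin.mk_lt_mk]) h)
        (asymm hdesc)
  · rintro ⟨hmono, hstrict⟩
    refine ⟨chain_le (v := f ∘ σ) hmono, fun i j hij heq => ?_⟩
    have key : ∀ l : ℕ, (i : ℕ) ≤ l → l + 1 ≤ (j : ℕ) → ∀ hl : l + 1 < n,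
        σ ⟨l, Nat.lt_of_succ_lt hl⟩ < σ ⟨l + 1, hl⟩ := by
      intro l hil hlj hl
      have hgeq : (f ∘ σ) ⟨l, Nat.lt_of_succ_lt hl⟩ = (f ∘ σ) ⟨l + 1, hl⟩ := by
        have m := chain_le (v := f ∘ σ) hmono
        have h1 : (f ∘ σ) i ≤ (f ∘ σ) ⟨l, Nat.lt_of_succ_lt hl⟩ := by
          apply m; rw [Fin.le_def]; exact hil
        have h2 : (f ∘ σ) ⟨l, Nat.lt_of_succ_lt hl⟩ ≤ (f ∘ σ) ⟨l + 1, hl⟩ :=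
          hmono l hl
        have h3 : (f ∘ σ) ⟨l + 1, hl⟩ ≤ (f ∘ σ) j := by
          apply m; rw [Fin.le_def]; exact hlj
        have heq' : (f ∘ σ) i = (f ∘ σ) j := heq
        exact le_antisymm h2 (by rw [← heq'] at h3; exact le_trans h3 h1)
      have hne : σ ⟨l, Nat.lt_of_succ_lt hl⟩ ≠ σ ⟨l + 1, hl⟩ := by
        intro hcon
        have := σ.injective hcon
        simp [Fin.ext_iff] at this
      rcases lt_or_gt_of_ne hne with h | h
      · exact h
      · exact absurd (hstrict l hl h) (by simpa using le_of_eq hgeq.symm)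
    have := chain_lt_of_between (v := fun x => σ x) i.isLt j.isLt hij key
    simpa using this

section fiber
variable {n k : ℕ}

/-- the strictly increasing sequence associated to `f` in the fiber of `σ` -/
def efun (σ : Equiv.Perm (Fin n)) (f : Fin n → Fin k) (i : Fin n) : ℕ :=
  (f (σ i) : ℕ) + ((i : ℕ) - dBelow n σ (i : ℕ))

lemma efun_adj (σ : Equiv.Perm (Fin n)) (f : Fin n → Fin k) (hf : Good σ (f ∘ σ))
    (j : ℕ) (hj : j + 1 < n) :
    efun σ f ⟨j, Nat.lt_of_succ_lt hj⟩ < efun σ f ⟨j + 1, hj⟩ := by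
  have e1 : efun σ f ⟨j, Nat.lt_of_succ_lt hj⟩
      = (f (σ ⟨j, Nat.lt_of_succ_lt hj⟩) : ℕ) + (j - dBelow n σ j) := rfl
  have e2 : efun σ f ⟨j + 1, hj⟩
      = (f (σ ⟨j + 1, hj⟩) : ℕ) + (j + 1 - dBelow n σ (j + 1)) := rfl
  rw [e1, e2]
  have hd := dBelow_succ n σ j
  have hd1 : dBelow n σ j ≤ j := dBelow_le n σ j
  by_cases hdesc : ∀ h : j + 1 < n, σ ⟨j + 1, h⟩ < σ ⟨j, Nat.lt_of_succ_lt h⟩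
  · have hs : (f (σ ⟨j, Nat.lt_of_succ_lt hj⟩) : ℕ) < (f (σ ⟨j+1, hj⟩) : ℕ) :=
      hf.2 j hj (hdesc hj)
    rw [if_pos hdesc] at hd
    clear * - hd hd1 hs
    omega
  · have hs : (f (σ ⟨j, Nat.lt_of_succ_lt hj⟩) : ℕ) ≤ (f (σ ⟨j+1, hj⟩) : ℕ) :=
      hf.1 j hj
    rw [if_neg hdesc] at hd
    clear * - hd hd1 hs
    omega

lemma efun_strictMono (σ : Equiv.Perm (Fin n)) (f : Fin n → Fin k) (hf : Good σ (f ∘ σ)) :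
    StrictMono (efun σ f) :=
  chain_strict (fun j hj => efun_adj σ f hf j hj)

lemma fiber_card (hn : 1 ≤ n) (hk : 1 ≤ k) (σ : Equiv.Perm (Fin n)) :
    (Finset.univ.filter (fun f : Fin n → Fin k => Tuple.sort f = σ)).card
      = (n - 1 + k - numDescents n σ).choose n := by
  classical
  set q := numDescents n σ with hqdef
  have hqn : q ≤ n - 1 := numDescents_le n σ
  set M := n - 1 + k - q with hM
  have hMq : M = n - 1 + k - q := hM
  have hMchoose : (n - 1 + k - q).choose n = ((Finset.range M).powersetCard n).card := by
    rw [Finset.card_powersetCard, Finset.card_range]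
  rw [hMchoose]
  have hn1 : n - 1 < n := by omega
  have hbound : ∀ (f : Fin n → Fin k), Good σ (f ∘ σ) → ∀ i : Fin n, efun σ f i < M := by
    intro f hf i
    have hgap := chain_gap (v := efun σ f) (fun j hj => efun_adj σ f hf j hj)
      (i : ℕ) (n - 1) i.isLt hn1 (by omega)
    rw [Fin.eta] at hgap
    have hend : efun σ f ⟨n - 1, hn1⟩ = (f (σ ⟨n - 1, hn1⟩) : ℕ) + ((n - 1) - q) := rfl
    rw [hend] at hgap
    have hfk : (f (σ ⟨n - 1, hn1⟩) : ℕ) < k := (f (σ ⟨n - 1, hn1⟩)).isLt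
    have hi : (i : ℕ) < n := i.isLt
    clear * - hgap hfk hi hMq hqn hn hk
    omega
  apply Finset.card_bij (fun f _ => Finset.image (efun σ f) Finset.univ)
  · -- membership
    intro f hf
    rw [Finset.mem_filter] at hf
    have hgood : Good σ (f ∘ σ) := (sort_char f σ).1 hf.2
    rw [Finset.mem_powersetCard]
    constructor
    · intro x hx
      rw [Finset.mem_image] at hx
      obtain ⟨i, _, rfl⟩ := hx
      exact Finset.mem_range.2 (hbound f hgood i)
    · rw [Finset.card_image_of_injective _ (efun_strictMono σ f hgood).injective,
        Finset.card_univ, Fintype.card_fin]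
  · -- injectivity
    intro f1 h1 f2 h2 heq
    rw [Finset.mem_filter] at h1 h2
    have hg1 : Good σ (f1 ∘ σ) := (sort_char f1 σ).1 h1.2
    have hg2 : Good σ (f2 ∘ σ) := (sort_char f2 σ).1 h2.2
    have hcard1 : (Finset.image (efun σ f1) Finset.univ).card = n := by
      rw [Finset.card_image_of_injective _ (efun_strictMono σ f1 hg1).injective,
        Finset.card_univ, Fintype.card_fin]
    have he1 : efun σ f1 = (Finset.image (efun σ f1) Finset.univ).orderEmbOfFin hcard1 :=
      Finset.orderEmbOfFin_unique hcard1
        (fun x => Finset.mem_image_of_mem _ (Finset.mem_univ x)) (efun_strictMono σ f1 hg1)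
    have he2 : efun σ f2 = (Finset.image (efun σ f1) Finset.univ).orderEmbOfFin hcard1 :=
      Finset.orderEmbOfFin_unique hcard1
        (fun x => by rw [heq]; exact Finset.mem_image_of_mem _ (Finset.mem_univ x))
        (efun_strictMono σ f2 hg2)
    have hee : efun σ f1 = efun σ f2 := by rw [he1, he2]
    funext x
    have hx := congrFun hee (σ⁻¹ x)
    unfold efun at hx
    simp only [Equiv.Perm.inv_def, Equiv.apply_symm_apply] at hx
    exact Fin.ext (by clear * - hx; omega)
  · -- surjectivity
    intro s hs
    rw [Finset.mem_powersetCard] at hs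
    obtain ⟨hsub, hcard⟩ := hs
    set h : Fin n → ℕ := fun i => s.orderEmbOfFin hcard i with hh
    have hstrict : StrictMono h := (s.orderEmbOfFin hcard).strictMono
    have hadj : ∀ j : ℕ, ∀ hj : j + 1 < n, h ⟨j, Nat.lt_of_succ_lt hj⟩ < h ⟨j + 1, hj⟩ :=
      fun j hj => hstrict (by simp [Fin.mk_lt_mk])
    have hge : ∀ i : Fin n, (i : ℕ) ≤ h i := by
      intro i
      have hg0 := chain_gap (v := h) hadj 0 (i : ℕ) (by omega) i.isLt (Nat.zero_le _)
      rw [Fin.eta] at hg0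
      clear * - hg0
      omega
    have hltM : ∀ i : Fin n, h i < M := by
      intro i
      have : h i ∈ s := Finset.orderEmbOfFin_mem s hcard i
      exact Finset.mem_range.1 (hsub this)
    have hgapend : ∀ i : Fin n, h i + ((n - 1) - (i : ℕ)) ≤ h ⟨n - 1, hn1⟩ := by
      intro i
      have hg0 := chain_gap (v := h) hadj (i : ℕ) (n - 1) i.isLt hn1 (by omega)
      rw [Fin.eta] at hg0
      exact hg0
    have hdle : ∀ i : Fin n, dBelow n σ (i : ℕ) ≤ q := by
      intro i
      rw [hqdef, ← dBelow_eq_numDescents]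
      exact dBelow_mono n σ (by omega)
    have hgk : ∀ i : Fin n, h i - ((i : ℕ) - dBelow n σ (i : ℕ)) < k := by
      intro i
      have h1 := hgapend i
      have h2 := hltM ⟨n - 1, hn1⟩
      have h3 := hdle i
      have h4 := dBelow_le n σ (i : ℕ)
      have h5 := i.isLt
      clear * - h1 h2 h3 h4 h5 hMq hqn hn hk
      omega
    set g : Fin n → Fin k := fun i => ⟨h i - ((i : ℕ) - dBelow n σ (i : ℕ)), hgk i⟩ with hg
    refine ⟨fun x => g (σ⁻¹ x), Finset.mem_filter.2 ⟨Finset.mem_univ _, ?_⟩, ?_⟩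
    · -- sort = σ
      rw [sort_char]
      have hcomp : ∀ i : Fin n, ((fun x => g (σ⁻¹ x)) ∘ σ) i = g i := by
        intro i; simp
      constructor
      · intro j hj
        rw [hcomp, hcomp, Fin.le_def]
        show h ⟨j, Nat.lt_of_succ_lt hj⟩ - (j - dBelow n σ j)
          ≤ h ⟨j + 1, hj⟩ - (j + 1 - dBelow n σ (j + 1))
        have h1 := hadj j hj
        have h2 := dBelow_succ n σ j
        have h3 := dBelow_le n σ j
        have h4 : j ≤ h ⟨j, Nat.lt_of_succ_lt hj⟩ := hge ⟨j, Nat.lt_of_succ_lt hj⟩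
        split_ifs at h2 <;> [skip; skip] <;> (clear * - h1 h2 h3 h4; omega)
      · intro j hj hdesc
        rw [hcomp, hcomp, Fin.lt_def]
        show h ⟨j, Nat.lt_of_succ_lt hj⟩ - (j - dBelow n σ j)
          < h ⟨j + 1, hj⟩ - (j + 1 - dBelow n σ (j + 1))
        have h1 := hadj j hj
        have h2 := dBelow_succ n σ j
        have h3 := dBelow_le n σ j
        have h4 : j ≤ h ⟨j, Nat.lt_of_succ_lt hj⟩ := hge ⟨j, Nat.lt_of_succ_lt hj⟩
        have h5 : j + 1 ≤ h ⟨j + 1, hj⟩ := hge ⟨j + 1, hj⟩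
        have hpos : (if ∀ h : j + 1 < n, σ ⟨j + 1, h⟩ < σ ⟨j, Nat.lt_of_succ_lt h⟩
            then 1 else 0) = 1 := if_pos (fun _ => hdesc)
        rw [hpos] at h2
        clear * - h1 h2 h3 h4 h5
        omega
    · -- image of efun equals s
      have hvals : ∀ i : Fin n, efun σ (fun x => g (σ⁻¹ x)) i = h i := by
        intro i
        unfold efun
        simp only [Equiv.Perm.inv_def, Equiv.symm_apply_apply]
        show (h i - ((i : ℕ) - dBelow n σ (i : ℕ))) + ((i : ℕ) - dBelow n σ (i : ℕ)) = h i
        have hgei := hge i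
        clear * - hgei
        omega
      rw [show efun σ (fun x => g (σ⁻¹ x)) = h from funext hvals]
      apply Finset.coe_injective
      rw [Finset.coe_image, Finset.coe_univ, Set.image_univ, hh]
      exact Finset.range_orderEmbOfFin s hcard

end fiber

lemma worpitzky (n k : ℕ) (hn : 1 ≤ n) (hk : 1 ≤ k) :
    k ^ n = ∑ p ∈ Finset.range n, eulerianNumber n p * (n - 1 + k - p).choose n := by
  classical
  have h0 : k ^ n = (Finset.univ : Finset (Fin n → Fin k)).card := by
    rw [Finset.card_univ, Fintype.card_fun, Fintype.card_fin, Fintype.card_fin]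
  rw [h0]
  rw [Finset.card_eq_sum_card_fiberwise
    (f := fun f : Fin n → Fin k => Tuple.sort f) (t := Finset.univ)
    (fun f _ => Finset.mem_univ _)]
  have h1 : ∀ σ : Equiv.Perm (Fin n),
      (Finset.univ.filter (fun f : Fin n → Fin k => Tuple.sort f = σ)).card
        = (n - 1 + k - numDescents n σ).choose n := fun σ => fiber_card hn hk σ
  rw [Finset.sum_congr rfl (fun σ _ => h1 σ)]
  rw [← Finset.sum_fiberwise_of_maps_to
    (g := fun σ : Equiv.Perm (Fin n) => numDescents n σ) (t := Finset.range n)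
    (fun σ _ => by simp only [Finset.mem_range]; have := numDescents_le n σ; omega)]
  apply Finset.sum_congr rfl
  intro p _
  rw [Finset.sum_congr rfl (fun σ hσ => by
    rw [(Finset.mem_filter.1 hσ).2])]
  rw [Finset.sum_const, smul_eq_mul]
  rfl

lemma inner_eval (n q p : ℕ) (hn : 1 ≤ n) (hp : p < n) :
    (∑ i ∈ Finset.range (q + 1),
      (-1 : ℤ) ^ i * ((n + 1).choose i : ℤ) * ((n - 1 + (q + 1 - i) - p).choose n : ℤ))
      = if p = q then 1 else 0 := by
  rcases le_or_gt p q with hpq | hqp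
  · obtain ⟨d, hqd⟩ : ∃ d, q = p + d := ⟨q - p, by omega⟩
    have hsplit : (∑ i ∈ Finset.range (q + 1),
        (-1 : ℤ) ^ i * ((n + 1).choose i : ℤ) * ((n - 1 + (q + 1 - i) - p).choose n : ℤ))
        = ∑ i ∈ Finset.range (d + 1),
          (-1 : ℤ) ^ i * ((n + 1).choose i : ℤ) * ((n - 1 + (q + 1 - i) - p).choose n : ℤ) := by
      have hzero : ∀ i ∈ Finset.range (q + 1), i ∉ Finset.range (d + 1) →
          (-1 : ℤ) ^ i * ((n + 1).choose i : ℤ) * ((n - 1 + (q + 1 - i) - p).choose n : ℤ) = 0 := by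
        intro i hi hni
        rw [Finset.mem_range] at hi
        rw [Finset.mem_range, not_lt] at hni
        have hlt : n - 1 + (q + 1 - i) - p < n := by omega
        rw [Nat.choose_eq_zero_of_lt hlt]
        simp
      exact (Finset.sum_subset (Finset.range_subset_range.2 (by omega)) hzero).symm
    rw [hsplit]
    have hcongr : ∀ i ∈ Finset.range (d + 1),
        (-1 : ℤ) ^ i * ((n + 1).choose i : ℤ) * ((n - 1 + (q + 1 - i) - p).choose n : ℤ)
        = (-1 : ℤ) ^ i * ((n + 1).choose i : ℤ) * ((n + d - i).choose n : ℤ) := by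
      intro i hi
      rw [Finset.mem_range] at hi
      have harg : n - 1 + (q + 1 - i) - p = n + d - i := by omega
      rw [harg]
    rw [Finset.sum_congr rfl hcongr]
    have := Tsum_eval n d
    unfold Tsum at this
    rw [this]
    have : d = 0 ↔ p = q := by omega
    simp only [this]
  · rw [if_neg (by omega)]
    apply Finset.sum_eq_zero
    intro i hi
    rw [Finset.mem_range] at hi
    have : n - 1 + (q + 1 - i) - p < n := by omega
    rw [Nat.choose_eq_zero_of_lt this]
    simp

lemma eulerian_formula (n q : ℕ) (hn : 1 ≤ n) (hq : q ≤ n - 1) :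
    (eulerianNumber n q : ℤ) =
      ∑ i ∈ Finset.range (q + 1),
        (-1 : ℤ) ^ i * ((n + 1).choose i : ℤ) * (((q + 1 - i) ^ n : ℕ) : ℤ) := by
  have hW : ∀ i ∈ Finset.range (q + 1),
      (((q + 1 - i) ^ n : ℕ) : ℤ)
        = ∑ p ∈ Finset.range n,
            (eulerianNumber n p : ℤ) * ((n - 1 + (q + 1 - i) - p).choose n : ℤ) := by
    intro i hi
    rw [Finset.mem_range] at hi
    rw [worpitzky n (q + 1 - i) hn (by omega)]
    push_cast
    rfl
  rw [Finset.sum_congr rfl (fun i hi => by rw [hW i hi, Finset.mul_sum])]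
  rw [Finset.sum_comm]
  have hterm : ∀ p ∈ Finset.range n,
      (∑ i ∈ Finset.range (q + 1),
        (-1 : ℤ) ^ i * ((n + 1).choose i : ℤ)
          * ((eulerianNumber n p : ℤ) * ((n - 1 + (q + 1 - i) - p).choose n : ℤ)))
      = if p = q then (eulerianNumber n p : ℤ) else 0 := by
    intro p hp
    rw [Finset.mem_range] at hp
    have : (∑ i ∈ Finset.range (q + 1),
        (-1 : ℤ) ^ i * ((n + 1).choose i : ℤ)
          * ((eulerianNumber n p : ℤ) * ((n - 1 + (q + 1 - i) - p).choose n : ℤ)))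
        = (eulerianNumber n p : ℤ) * ∑ i ∈ Finset.range (q + 1),
            (-1 : ℤ) ^ i * ((n + 1).choose i : ℤ) * ((n - 1 + (q + 1 - i) - p).choose n : ℤ) := by
      rw [Finset.mul_sum]
      apply Finset.sum_congr rfl
      intro i _
      ring
    rw [this, inner_eval n q p hn hp]
    split_ifs <;> simp
  rw [Finset.sum_congr rfl hterm, Finset.sum_ite_eq' (Finset.range n) q
    (fun p => (eulerianNumber n p : ℤ))]
  rw [if_pos (Finset.mem_range.2 (by omega))]



lemma residue_filter_eq_image (m : ℕ) (hm : 2 ≤ m) (r : ℤ) (hr1 : 1 ≤ r)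
    (hr2 : r ≤ (m : ℤ) - 1) (B : ℕ) :
    ((Finset.Icc (0 : ℤ) ((m : ℤ) * B)).filter (fun x => x ≡ r [ZMOD (m : ℤ)]))
      = Finset.image (fun t => r + (m : ℤ) * t) (Finset.Icc (0 : ℤ) ((B : ℤ) - 1)) := by
  have hmpos : (0 : ℤ) < (m : ℤ) := by exact_mod_cast (by omega : 0 < m)
  ext x
  simp only [Finset.mem_filter, Finset.mem_Icc, Finset.mem_image]
  constructor
  · rintro ⟨⟨hx0, hxB⟩, hmod⟩
    obtain ⟨t, ht⟩ := (Int.modEq_iff_dvd.1 hmod)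
    have hx : x = r + (m : ℤ) * (-t) := by rw [mul_neg]; omega
    refine ⟨-t, ⟨?_, ?_⟩, hx.symm⟩
    · by_contra hneg
      push_neg at hneg
      have : (m : ℤ) * (-t) ≤ (m : ℤ) * (-1) := by
        apply mul_le_mul_of_nonneg_left (by omega) (le_of_lt hmpos)
      omega
    · by_contra hbig
      push_neg at hbig
      have : (m : ℤ) * (B : ℤ) ≤ (m : ℤ) * (-t) := by
        apply mul_le_mul_of_nonneg_left (by omega) (le_of_lt hmpos)
      omega
  · rintro ⟨t, ⟨ht0, htB⟩, rfl⟩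
    have h1 : 0 ≤ (m : ℤ) * t := mul_nonneg (le_of_lt hmpos) ht0
    have h2 : (m : ℤ) * t ≤ (m : ℤ) * ((B : ℤ) - 1) :=
      mul_le_mul_of_nonneg_left htB (le_of_lt hmpos)
    refine ⟨⟨by omega, by nlinarith⟩, ?_⟩
    have : (m : ℤ) ∣ (r - (r + (m : ℤ) * t)) := ⟨-t, by ring⟩
    exact (Int.modEq_iff_dvd.2 this)

lemma residue_count (m : ℕ) (hm : 2 ≤ m) (r : ℤ) (hr1 : 1 ≤ r)
    (hr2 : r ≤ (m : ℤ) - 1) (B : ℕ) :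
    ((Finset.Icc (0 : ℤ) ((m : ℤ) * B)).filter (fun x => x ≡ r [ZMOD (m : ℤ)])).card = B := by
  rw [residue_filter_eq_image m hm r hr1 hr2 B]
  rw [Finset.card_image_of_injective _ (fun t1 t2 h => by
    have hm0 : (m : ℤ) ≠ 0 := by exact_mod_cast (by omega : m ≠ 0)
    have : (m : ℤ) * t1 = (m : ℤ) * t2 := by omega
    exact mul_left_cancel₀ hm0 this)]
  rw [Int.card_Icc]
  omega

lemma residue_count_le (m : ℕ) (hm : 2 ≤ m) (r : ℤ) (hr1 : 1 ≤ r)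
    (hr2 : r ≤ (m : ℤ) - 1) (B : ℕ) :
    ((Finset.Icc (0 : ℤ) ((m : ℤ) * B - 1)).filter (fun x => x ≡ r [ZMOD (m : ℤ)])).card ≤ B := by
  calc ((Finset.Icc (0 : ℤ) ((m : ℤ) * B - 1)).filter (fun x => x ≡ r [ZMOD (m : ℤ)])).card
      ≤ ((Finset.Icc (0 : ℤ) ((m : ℤ) * B)).filter (fun x => x ≡ r [ZMOD (m : ℤ)])).card := by
        apply Finset.card_le_card
        apply Finset.filter_subset_filter
        exact Finset.Icc_subset_Icc (le_refl _) (by omega)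
    _ = B := residue_count m hm r hr1 hr2 B

lemma count_bounds (n : ℕ) (a c : Fin n → ℕ) (ha : ∀ j, 0 < a j) (hc : ∀ j, 0 < c j)
    (m : ℕ) (hm : 2 ≤ m) (r : Fin n → ℤ) (hr : ∀ j, 1 ≤ r j ∧ r j ≤ (m : ℤ) - 1)
    (k : ℕ) (hk : 1 ≤ k) :
    ∃ N E : ℕ,
      Set.ncard {x : Fin n → ℤ |
        (∀ j, x j ≡ r j [ZMOD (m : ℤ)]) ∧
        (fun j => (x j : ℝ) / ((k * m : ℕ) : ℝ)) ∈ truncBox n a c} = N ∧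
      N + E = k ^ n * ∏ j, a j ∧ E ≤ k ^ n * ∏ j, c j := by
  classical
  have hkm : (0 : ℝ) < ((k * m : ℕ) : ℝ) := by
    have : 0 < k * m := by positivity
    exact_mod_cast this
  set P : Finset (Fin n → ℤ) := Fintype.piFinset
    (fun j => (Finset.Icc (0 : ℤ) ((m : ℤ) * (k * a j))).filter
      (fun x => x ≡ r j [ZMOD (m : ℤ)])) with hP
  set cond : (Fin n → ℤ) → Prop := fun x =>
    (1 : ℝ) ≤ ∑ j, ((x j : ℝ) / ((k * m : ℕ) : ℝ)) / (c j : ℝ) with hcond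
  set F : Finset (Fin n → ℤ) := P.filter cond with hF
  -- the set equals the finset F
  have hset : {x : Fin n → ℤ |
      (∀ j, x j ≡ r j [ZMOD (m : ℤ)]) ∧
      (fun j => (x j : ℝ) / ((k * m : ℕ) : ℝ)) ∈ truncBox n a c} = (F : Set (Fin n → ℤ)) := by
    ext x
    simp only [Set.mem_setOf_eq, hF, Finset.coe_filter, hP, Fintype.mem_piFinset,
      Finset.mem_filter, Finset.mem_Icc, truncBox, Set.mem_setOf_eq]
    constructor
    · rintro ⟨hmod, hbox, hsum⟩
      refine ⟨fun j => ⟨⟨?_, ?_⟩, hmod j⟩, hsum⟩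
      · have := (hbox j).1
        have h2 : (0 : ℝ) ≤ (x j : ℝ) := by
          have := mul_nonneg this (le_of_lt hkm)
          rwa [div_mul_cancel₀] at this
          exact ne_of_gt hkm
        exact_mod_cast h2
      · have := (hbox j).2
        have h2 : (x j : ℝ) ≤ (a j : ℝ) * ((k * m : ℕ) : ℝ) := by
          rw [div_le_iff₀ hkm] at this
          exact this
        have h3 : (x j : ℝ) ≤ ((m * (k * a j) : ℕ) : ℝ) := by
          rw [show ((m * (k * a j) : ℕ) : ℝ) = (a j : ℝ) * ((k * m : ℕ) : ℝ) by
            push_cast; ring]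
          exact h2
        exact_mod_cast h3
    · rintro ⟨hall, hsum⟩
      refine ⟨fun j => (hall j).2, fun j => ⟨?_, ?_⟩, hsum⟩
      · apply div_nonneg _ (le_of_lt hkm)
        exact_mod_cast (hall j).1.1
      · rw [div_le_iff₀ hkm]
        have h3 : (x j : ℝ) ≤ ((m * (k * a j) : ℕ) : ℝ) := by
          exact_mod_cast (hall j).1.2
        rw [show ((m * (k * a j) : ℕ) : ℝ) = (a j : ℝ) * ((k * m : ℕ) : ℝ) by
          push_cast; ring] at h3
        exact h3
  have hPcard : P.card = k ^ n * ∏ j, a j := by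
    rw [hP, Fintype.card_piFinset]
    have : ∀ j, ((Finset.Icc (0 : ℤ) ((m : ℤ) * (k * a j))).filter
        (fun x => x ≡ r j [ZMOD (m : ℤ)])).card = k * a j := by
      intro j
      have := residue_count m hm (r j) (hr j).1 (hr j).2 (k * a j)
      rwa [show ((k * a j : ℕ) : ℤ) = ((k : ℤ) * (a j : ℤ)) by push_cast; ring] at this
      
    rw [Finset.prod_congr rfl (fun j _ => this j)]
    rw [Finset.prod_mul_distrib, Finset.prod_const, Finset.card_univ, Fintype.card_fin]
  -- the bad set
  set bad : Finset (Fin n → ℤ) := P.filter (fun x => ¬ cond x) with hbad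
  have hsplit : F.card + bad.card = P.card := by
    rw [hF, hbad]
    exact Finset.card_filter_add_card_filter_not cond
  have hbadle : bad.card ≤ k ^ n * ∏ j, c j := by
    have hsubset : bad ⊆ Fintype.piFinset
        (fun j => (Finset.Icc (0 : ℤ) ((m : ℤ) * (k * c j) - 1)).filter
          (fun x => x ≡ r j [ZMOD (m : ℤ)])) := by
      intro x hx
      rw [hbad, Finset.mem_filter] at hx
      obtain ⟨hxP, hxcond⟩ := hx
      rw [hP, Fintype.mem_piFinset] at hxP
      rw [Fintype.mem_piFinset]
      intro j
      have hj := hxP j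
      rw [Finset.mem_filter, Finset.mem_Icc] at hj
      rw [Finset.mem_filter, Finset.mem_Icc]
      refine ⟨⟨hj.1.1, ?_⟩, hj.2⟩
      -- x j < k * m * c j
      rw [hcond] at hxcond
      push_neg at hxcond
      have hIcc : ∀ i, 0 ≤ x i := fun i =>
        (Finset.mem_Icc.1 (Finset.mem_filter.1 (hxP i)).1).1
      have hterm_nonneg : ∀ i ∈ Finset.univ,
          (0 : ℝ) ≤ ((x i : ℝ) / ((k * m : ℕ) : ℝ)) / (c i : ℝ) := by
        intro i _
        apply div_nonneg
        · apply div_nonneg _ (le_of_lt hkm)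
          exact_mod_cast hIcc i
        · exact_mod_cast Nat.zero_le (c i)
      have hjle : ((x j : ℝ) / ((k * m : ℕ) : ℝ)) / (c j : ℝ) < 1 :=
        lt_of_le_of_lt (Finset.single_le_sum hterm_nonneg (Finset.mem_univ j)) hxcond
      have hcj : (0 : ℝ) < (c j : ℝ) := by exact_mod_cast hc j
      rw [div_lt_one hcj, div_lt_iff₀ hkm] at hjle
      have hxj : (x j : ℝ) < ((m * (k * c j) : ℕ) : ℝ) := by
        rw [show ((m * (k * c j) : ℕ) : ℝ) = (c j : ℝ) * ((k * m : ℕ) : ℝ) by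
          push_cast; ring]
        exact hjle
      have hxj' : x j < ((m * (k * c j) : ℕ) : ℤ) := by exact_mod_cast hxj
      have hcast : ((m * (k * c j) : ℕ) : ℤ) = (m : ℤ) * ((k : ℤ) * (c j : ℤ)) := by
        push_cast; ring
      omega
    calc bad.card ≤ _ := Finset.card_le_card hsubset
      _ ≤ k ^ n * ∏ j, c j := by
        rw [Fintype.card_piFinset]
        have hle : ∀ j, ((Finset.Icc (0 : ℤ) ((m : ℤ) * (k * c j) - 1)).filter
            (fun x => x ≡ r j [ZMOD (m : ℤ)])).card ≤ k * c j := by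
          intro j
          have := residue_count_le m hm (r j) (hr j).1 (hr j).2 (k * c j)
          rwa [show ((k * c j : ℕ) : ℤ) = ((k : ℤ) * (c j : ℤ)) by push_cast; ring] at this
        calc (∏ j, ((Finset.Icc (0 : ℤ) ((m : ℤ) * (k * c j) - 1)).filter
              (fun x => x ≡ r j [ZMOD (m : ℤ)])).card)
            ≤ ∏ j, (k * c j) := Finset.prod_le_prod (fun _ _ => Nat.zero_le _) (fun j _ => hle j)
          _ = k ^ n * ∏ j, c j := by
            rw [Finset.prod_mul_distrib, Finset.prod_const, Finset.card_univ, Fintype.card_fin]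
  refine ⟨F.card, bad.card, ?_, hsplit.trans hPcard, hbadle⟩
  rw [hset, Set.ncard_coe_finset]

lemma truncBox_subset_box (n : ℕ) (a c : Fin n → ℕ) :
    truncBox n a c ⊆ Set.pi Set.univ (fun j => Set.Icc (0 : ℝ) (a j : ℝ)) := by
  intro x hx
  rw [Set.mem_pi]
  intro j _
  exact ⟨(hx.1 j).1, (hx.1 j).2⟩

lemma volume_pi_box (n : ℕ) (b : Fin n → ℕ) :
    volume (Set.pi Set.univ (fun j => Set.Icc (0 : ℝ) (b j : ℝ)))
      = ENNReal.ofReal (∏ j, (b j : ℝ)) := by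
  rw [volume_pi_pi]
  have h1 : ∀ j ∈ Finset.univ, volume (Set.Icc (0:ℝ) (b j : ℝ)) = ENNReal.ofReal (b j : ℝ) := by
    intro j _
    rw [Real.volume_Icc, sub_zero]
  rw [Finset.prod_congr rfl h1]
  rw [← ENNReal.ofReal_prod_of_nonneg (fun j _ => by positivity)]

lemma volume_truncBox_bounds (n : ℕ) (a c : Fin n → ℕ) (hc : ∀ j, 0 < c j)
    (hca : ∀ j, c j ≤ a j) :
    (volume (truncBox n a c)).toReal ≤ ∏ j, (a j : ℝ) ∧
    (∏ j, (a j : ℝ)) - (∏ j, (c j : ℝ)) ≤ (volume (truncBox n a c)).toReal := by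
  set box := Set.pi Set.univ (fun j => Set.Icc (0 : ℝ) (a j : ℝ)) with hbox
  set small := Set.pi Set.univ (fun j => Set.Icc (0 : ℝ) (c j : ℝ)) with hsmall
  have hvbox : volume box = ENNReal.ofReal (∏ j, (a j : ℝ)) := volume_pi_box n a
  have hvsmall : volume small = ENNReal.ofReal (∏ j, (c j : ℝ)) := volume_pi_box n c
  have hup : volume (truncBox n a c) ≤ ENNReal.ofReal (∏ j, (a j : ℝ)) := by
    rw [← hvbox]
    exact measure_mono (truncBox_subset_box n a c)
  have hne : volume (truncBox n a c) ≠ ⊤ :=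
    ne_top_of_le_ne_top ENNReal.ofReal_ne_top hup
  constructor
  · exact ENNReal.toReal_le_of_le_ofReal (by positivity) hup
  · -- lower bound
    have hdiff_sub : box \ small ⊆ truncBox n a c := by
      intro x hx
      obtain ⟨hxbox, hxsmall⟩ := hx
      rw [hbox, Set.mem_pi] at hxbox
      constructor
      · exact fun j => ⟨(hxbox j trivial).1, (hxbox j trivial).2⟩
      · rw [hsmall, Set.mem_pi] at hxsmall
        push_neg at hxsmall
        obtain ⟨j, _, hj⟩ := hxsmall
        rw [Set.mem_Icc] at hj
        push_neg at hj
        have hxj : (c j : ℝ) < x j := hj ((hxbox j trivial).1)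
        have hcj : (0 : ℝ) < (c j : ℝ) := by exact_mod_cast hc j
        have h1 : (1 : ℝ) < x j / (c j : ℝ) := (one_lt_div hcj).2 hxj
        have hterms : ∀ i ∈ Finset.univ, (0 : ℝ) ≤ x i / (c i : ℝ) := by
          intro i _
          apply div_nonneg (hxbox i trivial).1
          exact_mod_cast Nat.zero_le (c i)
        have := Finset.single_le_sum hterms (Finset.mem_univ j)
        linarith
    have hsmallsub : small ⊆ box := by
      intro x hx
      rw [hsmall, Set.mem_pi] at hx
      rw [hbox, Set.mem_pi]
      intro j hj
      refine ⟨(hx j hj).1, le_trans (hx j hj).2 ?_⟩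
      exact_mod_cast hca j
    have hmeas_small : MeasurableSet small := by
      apply MeasurableSet.univ_pi
      intro j
      exact measurableSet_Icc
    have hsmall_ne : volume small ≠ ⊤ := by
      rw [hvsmall]; exact ENNReal.ofReal_ne_top
    have hdiff : volume (box \ small) = ENNReal.ofReal (∏ j, (a j : ℝ))
        - ENNReal.ofReal (∏ j, (c j : ℝ)) := by
      rw [measure_diff hsmallsub hmeas_small.nullMeasurableSet hsmall_ne, hvbox, hvsmall]
    have hlow : ENNReal.ofReal ((∏ j, (a j : ℝ)) - (∏ j, (c j : ℝ)))
        ≤ volume (truncBox n a c) := by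
      rw [ENNReal.ofReal_sub _ (by positivity)]
      rw [← hdiff]
      exact measure_mono hdiff_sub
    exact (ENNReal.ofReal_le_iff_le_toReal hne).1 hlow

/-- Asymptotic lattice point count for a truncated rectangular prism: for fixed
`n ≥ 1`, `0 ≤ q ≤ n−1` and `ε > 0`, there is `A > 0` such that whenever the side
lengths `a_j` are all at least `A` and the cut corner has volume at most
`(∏_j a_j)/A`, for every `m ≥ 2` and residues `1 ≤ r_j ≤ m−1`, the alternating sum
of counts of lattice points of `(q+1−i)·m·Δ` in the residue class `r` differs from
`A(n,q)·vol(Δ)` by at most `ε ∏_j a_j`. -/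
theorem truncated_prism_weight_asymptotics (n q : ℕ) (hn : 1 ≤ n) (hq : q ≤ n - 1)
    (ε : ℝ) (hε : 0 < ε) :
    ∃ A : ℝ, 0 < A ∧
      ∀ (a c : Fin n → ℕ), (∀ j, 0 < a j) → (∀ j, 0 < c j) → (∀ j, c j ≤ a j) →
        (∀ j, A ≤ (a j : ℝ)) →
        ((∏ j, c j : ℕ) : ℝ) ≤ ((∏ j, a j : ℕ) : ℝ) / A →
        ∀ m : ℕ, 2 ≤ m → ∀ r : Fin n → ℤ, (∀ j, 1 ≤ r j ∧ r j ≤ (m : ℤ) - 1) →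
        |(∑ i ∈ Finset.range (q + 1), (-1 : ℝ) ^ i * ((n + 1).choose i : ℝ) *
            (Set.ncard {x : Fin n → ℤ |
              (∀ j, x j ≡ r j [ZMOD (m : ℤ)]) ∧
              (fun j => (x j : ℝ) / (((q + 1 - i) * m : ℕ) : ℝ)) ∈ truncBox n a c} : ℝ))
          - (eulerianNumber n q : ℝ) * (volume (truncBox n a c)).toReal| ≤
        ε * ((∏ j, a j : ℕ) : ℝ) := by
  classical
  -- the constant K
  set K : ℝ := (∑ i ∈ Finset.range (q + 1),
      ((n + 1).choose i : ℝ) * ((((q + 1 - i) ^ n : ℕ)) : ℝ)) + (eulerianNumber n q : ℝ) with hK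
  have hK0 : 0 ≤ K := by
    apply add_nonneg
    · apply Finset.sum_nonneg
      intro i _
      positivity
    · positivity
  refine ⟨max 1 (K / ε + 1), lt_of_lt_of_le one_pos (le_max_left _ _), ?_⟩
  intro a c ha hc hca hA hCA m hm r hr
  set A : ℝ := max 1 (K / ε + 1) with hAdef
  have hA1 : (1 : ℝ) ≤ A := le_max_left _ _
  have hA0 : (0 : ℝ) < A := lt_of_lt_of_le one_pos hA1
  have hAK : K ≤ ε * A := by
    have h1 : K / ε + 1 ≤ A := le_max_right _ _
    have h2 : ε * (K / ε + 1) ≤ ε * A := mul_le_mul_of_nonneg_left h1 (le_of_lt hε)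
    have h3 : ε * (K / ε + 1) = K + ε := by field_simp
    linarith
  set P : ℝ := ((∏ j, a j : ℕ) : ℝ) with hPdef
  set Cc : ℝ := ((∏ j, c j : ℕ) : ℝ) with hCdef
  have hP0 : 0 ≤ P := by positivity
  have hC0 : 0 ≤ Cc := by positivity
  set V : ℝ := (volume (truncBox n a c)).toReal with hV
  -- volume bounds
  obtain ⟨hVle, hVge⟩ := volume_truncBox_bounds n a c hc hca
  have hprodcast_a : (∏ j, (a j : ℝ)) = P := by rw [hPdef]; push_cast; rfl
  have hprodcast_c : (∏ j, (c j : ℝ)) = Cc := by rw [hCdef]; push_cast; rfl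
  rw [hprodcast_a] at hVle hVge
  rw [hprodcast_c] at hVge
  have hPV : |P - V| ≤ Cc := abs_le.2 ⟨by linarith, by linarith⟩
  -- counting bounds
  have key : ∀ i ∈ Finset.range (q + 1),
      |(Set.ncard {x : Fin n → ℤ |
          (∀ j, x j ≡ r j [ZMOD (m : ℤ)]) ∧
          (fun j => (x j : ℝ) / (((q + 1 - i) * m : ℕ) : ℝ)) ∈ truncBox n a c} : ℝ)
        - ((((q + 1 - i) ^ n : ℕ)) : ℝ) * P| ≤ ((((q + 1 - i) ^ n : ℕ)) : ℝ) * Cc := by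
    intro i hi
    rw [Finset.mem_range] at hi
    obtain ⟨N, E, hNcard, hNE, hEle⟩ :=
      count_bounds n a c ha hc m hm r hr (q + 1 - i) (by omega)
    rw [hNcard]
    have h1 : (N : ℝ) + (E : ℝ) = ((((q + 1 - i) ^ n : ℕ)) : ℝ) * P := by
      rw [hPdef]
      exact_mod_cast congrArg (Nat.cast : ℕ → ℝ) hNE
    have h2 : (E : ℝ) ≤ ((((q + 1 - i) ^ n : ℕ)) : ℝ) * Cc := by
      rw [hCdef]
      exact_mod_cast hEle
    have h3 : (0 : ℝ) ≤ (E : ℝ) := by positivity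
    rw [abs_le]
    constructor <;> linarith
  -- the Eulerian identity, over ℝ
  have hformula : (eulerianNumber n q : ℝ)
      = ∑ i ∈ Finset.range (q + 1),
          (-1 : ℝ) ^ i * ((n + 1).choose i : ℝ) * ((((q + 1 - i) ^ n : ℕ)) : ℝ) := by
    have := eulerian_formula n q hn hq
    have hcast := congrArg (Int.cast : ℤ → ℝ) this
    push_cast at hcast ⊢
    convert hcast using 2
  -- decompose
  set Ncard : ℕ → ℝ := fun i => (Set.ncard {x : Fin n → ℤ |
      (∀ j, x j ≡ r j [ZMOD (m : ℤ)]) ∧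
      (fun j => (x j : ℝ) / (((q + 1 - i) * m : ℕ) : ℝ)) ∈ truncBox n a c} : ℝ) with hNc
  have hdecomp : (∑ i ∈ Finset.range (q + 1),
        (-1 : ℝ) ^ i * ((n + 1).choose i : ℝ) * Ncard i)
      - (eulerianNumber n q : ℝ) * V
      = (∑ i ∈ Finset.range (q + 1), (-1 : ℝ) ^ i * ((n + 1).choose i : ℝ)
          * (Ncard i - ((((q + 1 - i) ^ n : ℕ)) : ℝ) * P))
        + (eulerianNumber n q : ℝ) * (P - V) := by
    have hexp : ∀ i ∈ Finset.range (q + 1),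
        (-1 : ℝ) ^ i * ((n + 1).choose i : ℝ)
            * (Ncard i - ((((q + 1 - i) ^ n : ℕ)) : ℝ) * P)
        = (-1 : ℝ) ^ i * ((n + 1).choose i : ℝ) * Ncard i
          - ((-1 : ℝ) ^ i * ((n + 1).choose i : ℝ) * ((((q + 1 - i) ^ n : ℕ)) : ℝ)) * P := by
      intro i _
      ring
    rw [Finset.sum_congr rfl hexp, Finset.sum_sub_distrib, ← Finset.sum_mul, ← hformula]
    ring
  rw [hdecomp]
  -- bound everything
  have habs : |(∑ i ∈ Finset.range (q + 1), (-1 : ℝ) ^ i * ((n + 1).choose i : ℝ)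
          * (Ncard i - ((((q + 1 - i) ^ n : ℕ)) : ℝ) * P))
        + (eulerianNumber n q : ℝ) * (P - V)| ≤ K * Cc := by
    calc |(∑ i ∈ Finset.range (q + 1), (-1 : ℝ) ^ i * ((n + 1).choose i : ℝ)
          * (Ncard i - ((((q + 1 - i) ^ n : ℕ)) : ℝ) * P))
        + (eulerianNumber n q : ℝ) * (P - V)|
        ≤ |∑ i ∈ Finset.range (q + 1), (-1 : ℝ) ^ i * ((n + 1).choose i : ℝ)
            * (Ncard i - ((((q + 1 - i) ^ n : ℕ)) : ℝ) * P)|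
          + |(eulerianNumber n q : ℝ) * (P - V)| := abs_add_le _ _
      _ ≤ (∑ i ∈ Finset.range (q + 1), ((n + 1).choose i : ℝ)
            * (((((q + 1 - i) ^ n : ℕ)) : ℝ) * Cc))
          + (eulerianNumber n q : ℝ) * Cc := by
          apply add_le_add
          · calc |∑ i ∈ Finset.range (q + 1), (-1 : ℝ) ^ i * ((n + 1).choose i : ℝ)
                * (Ncard i - ((((q + 1 - i) ^ n : ℕ)) : ℝ) * P)|
                ≤ ∑ i ∈ Finset.range (q + 1), |(-1 : ℝ) ^ i * ((n + 1).choose i : ℝ)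
                  * (Ncard i - ((((q + 1 - i) ^ n : ℕ)) : ℝ) * P)| :=
                  Finset.abs_sum_le_sum_abs _ _
              _ ≤ ∑ i ∈ Finset.range (q + 1), ((n + 1).choose i : ℝ)
                  * (((((q + 1 - i) ^ n : ℕ)) : ℝ) * Cc) := by
                  apply Finset.sum_le_sum
                  intro i hi
                  rw [abs_mul, abs_mul, abs_pow, abs_neg, abs_one, one_pow, one_mul,
                    Nat.abs_cast]
                  exact mul_le_mul_of_nonneg_left (key i hi) (by positivity)
          · rw [abs_mul, Nat.abs_cast]
            exact mul_le_mul_of_nonneg_left hPV (by positivity)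
      _ = K * Cc := by
          rw [hK, add_mul, Finset.sum_mul]
          congr 1
          apply Finset.sum_congr rfl
          intro i _
          ring
  refine le_trans habs ?_
  -- K * Cc ≤ ε * P
  have hCc : Cc ≤ P / A := hCA
  calc K * Cc ≤ K * (P / A) := mul_le_mul_of_nonneg_left hCc hK0
    _ ≤ ε * P := by
        rw [mul_div_assoc']
        rw [div_le_iff₀ hA0]
        calc K * P ≤ (ε * A) * P := mul_le_mul_of_nonneg_right hAK hP0
          _ = ε * P * A := by ring
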